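/- arXiv:math/0601048 — 2 statements merged into one kernel-verified Lean document; each statement's English description precedes it below -/
import Mathlib

section
/- Static Sanov's Theorem for Sources: Let n0 ≥ 1, let ν ∈ R_{n0} be an n0-rational type, and let Q be a nonempty open subset of P(X). Then, as k → ∞ along the subsequence n = k·n0, (1/n)·log π_n(Q|ν) converges to L(Q‖ν) − L(P(X)‖ν), where L(P(X)‖ν) = Σ_x ν(x)·log ν(x). -/
open scoped BigOperators Classical
open Filter Topology

noncomputable section

def pmfSet (X : Type*) [Fintype X] : Set (X → ℝ) :=
  {p | (∀ x, 0 ≤ p x) ∧ ∑ x, p x = 1}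

def Rn (X : Type*) [Fintype X] (n : ℕ) : Set (X → ℝ) :=
  {q | q ∈ pmfSet X ∧ ∀ x, ∃ k : ℕ, q x = (k : ℝ) / (n : ℝ)}

def ratPMF (X : Type*) [Fintype X] : Set (X → ℝ) :=
  {q | q ∈ pmfSet X ∧ ∀ x, ∃ r : ℚ, q x = (r : ℝ)}

def Ldiv {X : Type*} [Fintype X] (q p : X → ℝ) : EReal :=
  ∑ x, if p x = 0 then (0 : EReal)
    else if q x = 0 then (⊥ : EReal)
    else (↑(p x * Real.log (q x)) : EReal)

def LSup {X : Type*} [Fintype X] (Q : Set (X → ℝ)) (p : X → ℝ) : EReal :=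
  ⨆ q ∈ Q, Ldiv q p

def Idiv {X : Type*} [Fintype X] (p q : X → ℝ) : EReal :=
  ∑ x, if p x = 0 then (0 : EReal)
    else if q x = 0 then (⊤ : EReal)
    else (↑(p x * Real.log (p x / q x)) : EReal)

def typeProb {X : Type*} [Fintype X] (n : ℕ) (ν q : X → ℝ) : ℝ :=
  ∏ x, q x ^ ((n : ℝ) * ν x)

def post {X : Type*} [Fintype X] (n : ℕ) (ν : X → ℝ) (Q : Set (X → ℝ)) : ℝ :=
  (∑' q : ↥(Q ∩ Rn X n), typeProb n ν ↑q) / (∑' q : ↥(Rn X n), typeProb n ν ↑q)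

def postGen {X : Type*} [Fintype X] (w : (X → ℝ) → ℝ) (n : ℕ) (ν : X → ℝ)
    (Q : Set (X → ℝ)) : ℝ :=
  (∑' q : ↥(Q ∩ Rn X n), w ↑q * typeProb n ν ↑q) /
  (∑' q : ↥(Rn X n), w ↑q * typeProb n ν ↑q)

def tv {X : Type*} [Fintype X] (p q : X → ℝ) : ℝ := (1 / 2) * ∑ x, |p x - q x|

def tvBall {X : Type*} [Fintype X] (q : X → ℝ) (ε : ℝ) : Set (X → ℝ) :=
  {p | p ∈ pmfSet X ∧ tv p q ≤ ε}

def elog (x : ℝ) : EReal := if x ≤ 0 then (⊥ : EReal) else (↑(Real.log x) : EReal)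

def linFam {X : Type*} [Fintype X] {k : ℕ} (u : Fin k → X → ℝ) (a : Fin k → ℝ) :
    Set (X → ℝ) :=
  {q | q ∈ pmfSet X ∧ ∀ j, ∑ x, q x * u j x = a j}

def lambdaN {X : Type*} [Fintype X] (w : (X → ℝ) → ℝ) (n : ℕ) (ν : X → ℝ)
    (C : Set (X → ℝ)) : EReal :=
  ⨆ q ∈ C ∩ {q | q ∈ Rn X n ∧ 0 < w q},
    (Ldiv q ν + (↑((1 : ℝ) / n * Real.log (w q)) : EReal))

def priorN {X : Type*} [Fintype X] (c : ℕ → (X → ℝ) → (X → ℝ)) (pr : (X → ℝ) → ℝ)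
    (n : ℕ) (qn : X → ℝ) : ℝ :=
  ∑' q : ↥{q | q ∈ ratPMF X ∧ c n q = qn}, pr ↑q


set_option linter.unusedSectionVars false
set_option maxHeartbeats 1000000

namespace Sanov
variable {X : Type*} [Fintype X]

def fdiv (ν q : X → ℝ) : ℝ := ∑ x, ν x * Real.log (q x)

def Pos (ν q : X → ℝ) : Prop := ∀ x, ν x ≠ 0 → 0 < q x

lemma pmf_nonneg {p : X → ℝ} (hp : p ∈ pmfSet X) (x : X) : 0 ≤ p x := hp.1 x

lemma pmf_le_one {p : X → ℝ} (hp : p ∈ pmfSet X) (x : X) : p x ≤ 1 := by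
  rw [← hp.2]
  exact Finset.single_le_sum (fun i _ => hp.1 i) (Finset.mem_univ x)

lemma typeProb_eq_exp {ν q : X → ℝ} (hP : Pos ν q) (n : ℕ) :
    typeProb n ν q = Real.exp ((n : ℝ) * fdiv ν q) := by
  rw [fdiv, Finset.mul_sum, Real.exp_sum, typeProb]
  refine Finset.prod_congr rfl fun x _ => ?_
  by_cases hx : ν x = 0
  · simp [hx]
  · rw [Real.rpow_def_of_pos (hP x hx)]; ring_nf

lemma typeProb_eq_zero {ν q : X → ℝ} (hν : ∀ x, 0 ≤ ν x) (hq : ∀ x, 0 ≤ q x)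
    (hP : ¬ Pos ν q) {n : ℕ} (hn : 1 ≤ n) : typeProb n ν q = 0 := by
  rw [Pos] at hP; push_neg at hP
  obtain ⟨x, hx, hx2⟩ := hP
  have hqx : q x = 0 := le_antisymm hx2 (hq x)
  refine Finset.prod_eq_zero (Finset.mem_univ x) ?_
  rw [hqx, Real.zero_rpow]
  have : 0 < ν x := lt_of_le_of_ne (hν x) (Ne.symm hx)
  have : 0 < (n : ℝ) * ν x := by positivity
  exact ne_of_gt this

lemma typeProb_nonneg (n : ℕ) (ν : X → ℝ) {q : X → ℝ} (hq : ∀ x, 0 ≤ q x) :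
    0 ≤ typeProb n ν q :=
  Finset.prod_nonneg fun x _ => Real.rpow_nonneg (hq x) _

lemma gibbs {ν q : X → ℝ} (hν : ν ∈ pmfSet X) (hq : q ∈ pmfSet X) (hP : Pos ν q) :
    fdiv ν q ≤ fdiv ν ν := by
  have key : ∑ x, ν x * (Real.log (q x) - Real.log (ν x)) ≤ ∑ x, (q x - ν x) := by
    refine Finset.sum_le_sum fun x _ => ?_
    by_cases hx : ν x = 0
    · simp [hx]; exact hq.1 x
    · have hνx : 0 < ν x := lt_of_le_of_ne (hν.1 x) (Ne.symm hx)
      have hqx : 0 < q x := hP x hx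
      have h1 : Real.log (q x) - Real.log (ν x) = Real.log (q x / ν x) := by
        rw [Real.log_div (ne_of_gt hqx) (ne_of_gt hνx)]
      rw [h1]
      have h2 : Real.log (q x / ν x) ≤ q x / ν x - 1 :=
        Real.log_le_sub_one_of_pos (by positivity)
      calc ν x * Real.log (q x / ν x) ≤ ν x * (q x / ν x - 1) :=
            mul_le_mul_of_nonneg_left h2 (le_of_lt hνx)
        _ = q x - ν x := by field_simp
  have hsum : ∑ x, (q x - ν x) = 0 := by
    rw [Finset.sum_sub_distrib, hq.2, hν.2]; ring
  have heq : ∑ x, ν x * (Real.log (q x) - Real.log (ν x)) = fdiv ν q - fdiv ν ν := by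
    rw [fdiv, fdiv, ← Finset.sum_sub_distrib]
    exact Finset.sum_congr rfl fun x _ => by ring
  linarith [key, hsum, heq.symm.le]

lemma coe_sum (s : Finset X) (g : X → ℝ) :
    ((∑ x ∈ s, g x : ℝ) : EReal) = ∑ x ∈ s, ((g x : ℝ) : EReal) := by
  induction s using Finset.cons_induction with
  | empty => simp
  | cons a s ha ih => rw [Finset.sum_cons, Finset.sum_cons, EReal.coe_add, ih]

lemma Ldiv_eq_coe {ν q : X → ℝ} (hP : Pos ν q) : Ldiv q ν = ((fdiv ν q : ℝ) : EReal) := by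
  rw [Ldiv, fdiv]
  rw [show (((∑ x, ν x * Real.log (q x)) : ℝ) : EReal)
      = ∑ x, ((ν x * Real.log (q x) : ℝ) : EReal) from coe_sum _ _]
  refine Finset.sum_congr rfl fun x _ => ?_
  by_cases hx : ν x = 0
  · simp [hx]
  · have := hP x hx
    rw [if_neg hx, if_neg (ne_of_gt this)]

lemma Ldiv_eq_bot {ν q : X → ℝ} (hq : ∀ x, 0 ≤ q x) (hP : ¬ Pos ν q) : Ldiv q ν = ⊥ := by
  rw [Pos] at hP; push_neg at hP
  obtain ⟨x, hx, hx2⟩ := hP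
  have hqx : q x = 0 := le_antisymm hx2 (hq x)
  rw [Ldiv, ← Finset.add_sum_erase _ _ (Finset.mem_univ x), if_neg hx, if_pos hqx,
    EReal.bot_add]

lemma Pos_self {ν : X → ℝ} (hν : ν ∈ pmfSet X) : Pos ν ν :=
  fun x hx => lt_of_le_of_ne (hν.1 x) (Ne.symm hx)

lemma LSup_pmfSet {ν : X → ℝ} (hν : ν ∈ pmfSet X) :
    LSup (pmfSet X) ν = ((fdiv ν ν : ℝ) : EReal) := by
  apply le_antisymm
  · refine iSup₂_le fun q hq => ?_
    by_cases hP : Pos ν q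
    · rw [Ldiv_eq_coe hP]; exact_mod_cast gibbs hν hq hP
    · rw [Ldiv_eq_bot hq.1 hP]; exact bot_le
  · rw [← Ldiv_eq_coe (Pos_self hν)]
    exact le_iSup₂ (f := fun q (_ : q ∈ pmfSet X) => Ldiv q ν) ν hν

lemma LSup_open {ν : X → ℝ} (hν : ν ∈ pmfSet X) {Q : Set (X → ℝ)} (hQsub : Q ⊆ pmfSet X)
    (hne : ({q | q ∈ Q ∧ Pos ν q}).Nonempty) :
    LSup Q ν = ((sSup (fdiv ν '' {q | q ∈ Q ∧ Pos ν q}) : ℝ) : EReal) := by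
  set S := fdiv ν '' {q | q ∈ Q ∧ Pos ν q} with hS
  have hSne : S.Nonempty := hne.image _
  have hSbdd : BddAbove S := by
    refine ⟨fdiv ν ν, ?_⟩
    rintro _ ⟨q, ⟨hq, hP⟩, rfl⟩
    exact gibbs hν (hQsub hq) hP
  apply le_antisymm
  · refine iSup₂_le fun q hq => ?_
    by_cases hP : Pos ν q
    · rw [Ldiv_eq_coe hP]
      exact_mod_cast le_csSup hSbdd ⟨q, ⟨hq, hP⟩, rfl⟩
    · rw [Ldiv_eq_bot (hQsub hq).1 hP]; exact bot_le
  · refine le_of_forall_lt fun c hc => ?_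
    have key : ∀ q, q ∈ Q → Pos ν q → ((fdiv ν q : ℝ) : EReal) ≤ LSup Q ν := by
      intro q hq hP
      rw [← Ldiv_eq_coe hP]
      exact le_iSup₂ (f := fun q (_ : q ∈ Q) => Ldiv q ν) q hq
    induction c using EReal.rec with
    | bot =>
      obtain ⟨q, hq, hP⟩ := hne
      exact lt_of_lt_of_le (EReal.bot_lt_coe _) (key q hq hP)
    | coe r =>
      have hr : r < sSup S := by exact_mod_cast hc
      obtain ⟨_, ⟨q, ⟨hq, hP⟩, rfl⟩, hrq⟩ := exists_lt_of_lt_csSup hSne hr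
      exact lt_of_lt_of_le (by exact_mod_cast hrq) (key q hq hP)
    | top => exact absurd hc (by simp)

def Dn (X : Type*) [Fintype X] (n : ℕ) : Finset (X → ℝ) :=
  (Fintype.piFinset fun _ : X => (Finset.range (n+1)).image (fun k : ℕ => (k:ℝ)/(n:ℝ))).filter
    (fun q => q ∈ Rn X n)

lemma coe_Dn {n : ℕ} (hn : 1 ≤ n) : (↑(Dn X n) : Set (X → ℝ)) = Rn X n := by
  ext q
  simp only [Dn, Finset.coe_filter, Set.mem_setOf_eq, Finset.mem_coe]
  constructor
  · exact fun h => h.2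
  · intro hq
    refine ⟨?_, hq⟩
    rw [Fintype.mem_piFinset]
    intro x
    obtain ⟨k, hk⟩ := hq.2 x
    rw [Finset.mem_image]
    refine ⟨k, ?_, hk.symm⟩
    rw [Finset.mem_range]
    have hq1 : q x ≤ 1 := by
      rw [← hq.1.2]
      exact Finset.single_le_sum (fun i _ => hq.1.1 i) (Finset.mem_univ x)
    have hnpos : (0:ℝ) < n := by exact_mod_cast hn
    have hkn : (k : ℝ) ≤ n := by
      rw [hk] at hq1
      exact (div_le_one hnpos).mp hq1
    exact_mod_cast Nat.lt_succ_of_le (by exact_mod_cast hkn)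

lemma mem_Dn {n : ℕ} (hn : 1 ≤ n) {q : X → ℝ} (hq : q ∈ Rn X n) : q ∈ Dn X n := by
  rw [← Finset.mem_coe, coe_Dn hn]; exact hq

lemma Dn_mem {n : ℕ} {q : X → ℝ} (hq : q ∈ Dn X n) : q ∈ Rn X n := by
  rw [Dn, Finset.mem_filter] at hq; exact hq.2

lemma card_Dn_le (n : ℕ) : (Dn X n).card ≤ (n+1) ^ (Fintype.card X) := by
  calc (Dn X n).card ≤ (Fintype.piFinset fun _ : X =>
        (Finset.range (n+1)).image (fun k : ℕ => (k:ℝ)/(n:ℝ))).card := Finset.card_filter_le _ _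
    _ = ∏ _x : X, ((Finset.range (n+1)).image (fun k : ℕ => (k:ℝ)/(n:ℝ))).card := by
        rw [Fintype.card_piFinset]
    _ ≤ ∏ _x : X, (n+1) := Finset.prod_le_prod (fun _ _ => Nat.zero_le _)
        (fun _ _ => le_trans (Finset.card_image_le) (by rw [Finset.card_range]))
    _ = (n+1) ^ (Fintype.card X) := by rw [Finset.prod_const, Finset.card_univ]

lemma tsum_Rn {n : ℕ} (hn : 1 ≤ n) (g : (X → ℝ) → ℝ) :
    ∑' q : ↥(Rn X n), g ↑q = ∑ q ∈ Dn X n, g q := by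
  rw [← coe_Dn hn]
  exact (Dn X n).tsum_subtype g

lemma tsum_QRn {n : ℕ} (hn : 1 ≤ n) (Q : Set (X → ℝ)) (g : (X → ℝ) → ℝ) :
    ∑' q : ↥(Q ∩ Rn X n), g ↑q = ∑ q ∈ (Dn X n).filter (· ∈ Q), g q := by
  have h : Q ∩ Rn X n = ↑((Dn X n).filter (· ∈ Q)) := by
    ext q
    simp only [Set.mem_inter_iff, Finset.coe_filter, Set.mem_setOf_eq, Finset.mem_coe,
      ← coe_Dn (X := X) hn]
    tauto
  rw [h]
  exact Finset.tsum_subtype _ g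

lemma round_exists [Nonempty X] {q : X → ℝ} (hq : q ∈ pmfSet X) {n : ℕ} (hn : 1 ≤ n) :
    ∃ g : X → ℝ, g ∈ Rn X n ∧ ∀ x, |g x - q x| ≤ (Fintype.card X : ℝ) / n := by
  classical
  obtain ⟨x0⟩ := ‹Nonempty X›
  have hnR : (0:ℝ) < n := by exact_mod_cast hn
  set m : ℝ := (Fintype.card X : ℝ) with hm
  have hm1 : (1:ℝ) ≤ m := by
    rw [hm]
    have : 1 ≤ Fintype.card X := Fintype.card_pos
    exact_mod_cast this
  set F : X → ℕ := fun x => ⌊(n:ℝ) * q x⌋₊ with hF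
  have hFle : ∀ x, (F x : ℝ) ≤ (n:ℝ) * q x := fun x =>
    Nat.floor_le (by have := hq.1 x; positivity)
  have hFgt : ∀ x, (n:ℝ) * q x - 1 ≤ (F x : ℝ) := fun x =>
    le_of_lt (Nat.sub_one_lt_floor _)
  set N : ℕ := ∑ y ∈ Finset.univ.erase x0, F y with hNdef
  have hNR : (N : ℝ) = ∑ y ∈ Finset.univ.erase x0, (F y : ℝ) := by
    rw [hNdef]; push_cast; rfl
  have hsum_q : ∑ y ∈ Finset.univ.erase x0, q y = 1 - q x0 := by
    have := Finset.add_sum_erase Finset.univ q (Finset.mem_univ x0)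
    rw [hq.2] at this
    linarith
  have hN_le : (N : ℝ) ≤ (n:ℝ) * (1 - q x0) := by
    rw [hNR, ← hsum_q, Finset.mul_sum]
    exact Finset.sum_le_sum fun y _ => hFle y
  have hN_ge : (n:ℝ) * (1 - q x0) - m ≤ (N : ℝ) := by
    rw [hNR, ← hsum_q, Finset.mul_sum]
    have h1 : ∑ y ∈ Finset.univ.erase x0, ((n:ℝ) * q y - 1) ≤
        ∑ y ∈ Finset.univ.erase x0, (F y : ℝ) :=
      Finset.sum_le_sum fun y _ => hFgt y
    have h2 : ∑ y ∈ Finset.univ.erase x0, ((n:ℝ) * q y - 1) =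
        (∑ y ∈ Finset.univ.erase x0, (n:ℝ) * q y) - (Finset.univ.erase x0).card := by
      rw [Finset.sum_sub_distrib, Finset.sum_const, nsmul_eq_mul, mul_one]
    have h3 : ((Finset.univ.erase x0).card : ℝ) ≤ m := by
      rw [hm]
      have h5 := Finset.card_erase_le (a := x0) (s := (Finset.univ : Finset X))
      have h4 : (Finset.univ : Finset X).card = Fintype.card X := Finset.card_univ
      exact_mod_cast le_trans h5 (le_of_eq h4)
    linarith
  have hq0 : 0 ≤ q x0 := hq.1 x0
  have hNn_le : (N:ℝ)/n ≤ 1 - q x0 := by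
    rw [div_le_iff₀ hnR]; nlinarith
  have hmn : (m/n) * (n:ℝ) = m := div_mul_cancel₀ m (ne_of_gt hnR)
  have h1n : (1/n) * (n:ℝ) = 1 := div_mul_cancel₀ 1 (ne_of_gt hnR)
  have hNn_ge : 1 - q x0 - m/n ≤ (N:ℝ)/n := by
    rw [le_div_iff₀ hnR]; nlinarith
  have hN_le_n : N ≤ n := by
    have h1 : (N:ℝ) ≤ n := by nlinarith
    exact_mod_cast h1
  set g : X → ℝ := fun x => if x = x0 then 1 - (N:ℝ)/n else (F x : ℝ)/n with hg
  have hg_sum_erase : ∑ y ∈ Finset.univ.erase x0, g y = (N:ℝ)/n := by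
    rw [hNR, Finset.sum_div]
    refine Finset.sum_congr rfl fun y hy => ?_
    rw [hg]
    simp only [Finset.mem_erase] at hy
    simp [hy.1]
  refine ⟨g, ⟨⟨?_, ?_⟩, ?_⟩, ?_⟩
  · intro x
    rw [hg]
    by_cases hx : x = x0
    · simp only [hx, eq_self_iff_true, if_true]
      linarith
    · simp only [if_neg hx]
      positivity
  · rw [← Finset.add_sum_erase Finset.univ g (Finset.mem_univ x0), hg_sum_erase]
    simp only [hg, eq_self_iff_true, if_true]
    ring
  · intro x
    by_cases hx : x = x0
    · refine ⟨n - N, ?_⟩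
      simp only [hg, hx, eq_self_iff_true, if_true]
      rw [Nat.cast_sub hN_le_n]
      field_simp
    · exact ⟨F x, by simp only [hg, if_neg hx]⟩
  · intro x
    rw [abs_le]
    have hmn0 : 0 ≤ m/n := by positivity
    by_cases hx : x = x0
    · simp only [hg, hx, eq_self_iff_true, if_true]
      constructor <;> linarith
    · simp only [hg, if_neg hx]
      have h1 : (F x : ℝ)/n ≤ q x := by
        rw [div_le_iff₀ hnR]; nlinarith [hFle x]
      have h2 : q x - 1/n ≤ (F x : ℝ)/n := by
        rw [le_div_iff₀ hnR]; nlinarith [hFgt x]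
      have h3 : (1:ℝ)/n ≤ m/n := by
        rw [div_le_div_iff_of_pos_right] <;> [exact hm1; exact hnR]
      constructor <;> linarith

lemma exists_ball {Q : Set (X → ℝ)} (hQopen : IsOpen {r : ↥(pmfSet X) | ↑r ∈ Q})
    {q : X → ℝ} (hq : q ∈ pmfSet X) (hqQ : q ∈ Q) :
    ∃ δ > 0, ∀ p ∈ pmfSet X, dist p q < δ → p ∈ Q := by
  rw [Metric.isOpen_iff] at hQopen
  obtain ⟨δ, hδ, hball⟩ := hQopen ⟨q, hq⟩ hqQ
  refine ⟨δ, hδ, fun p hp hd => ?_⟩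
  have h : (⟨p, hp⟩ : ↥(pmfSet X)) ∈ Metric.ball (⟨q, hq⟩ : ↥(pmfSet X)) δ := by
    rw [Metric.mem_ball, Subtype.dist_eq]
    exact hd
  exact hball h

lemma exists_pos_mem [Nonempty X] {Q : Set (X → ℝ)} (hQsub : Q ⊆ pmfSet X) (hQne : Q.Nonempty)
    (hQopen : IsOpen {r : ↥(pmfSet X) | ↑r ∈ Q}) :
    ∃ p ∈ Q, ∀ x, 0 < p x := by
  obtain ⟨q, hqQ⟩ := hQne
  have hq := hQsub hqQ
  obtain ⟨δ, hδ, hball⟩ := exists_ball hQopen hq hqQ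
  set m : ℝ := (Fintype.card X : ℝ) with hm
  have hm1 : (1:ℝ) ≤ m := by
    rw [hm]; exact_mod_cast (Fintype.card_pos : 1 ≤ Fintype.card X)
  set t : ℝ := min (δ/2) (1/2) with ht
  have ht0 : 0 < t := lt_min (by linarith) (by norm_num)
  have ht1 : t ≤ 1/2 := min_le_right _ _
  set p : X → ℝ := fun x => (1-t) * q x + t * (1/m) with hp
  have hppmf : p ∈ pmfSet X := by
    constructor
    · intro x
      rw [hp]
      simp only
      have h0 := hq.1 x
      have hmp : 0 < t * (1/m) := by positivity
      nlinarith [mul_nonneg (by linarith : (0:ℝ) ≤ 1-t) h0]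
    · rw [hp]
      simp only
      rw [Finset.sum_add_distrib, ← Finset.mul_sum, hq.2, Finset.sum_const, nsmul_eq_mul,
        Finset.card_univ]
      rw [hm]
      have : (Fintype.card X : ℝ) ≠ 0 := by positivity
      field_simp
      ring
  refine ⟨p, hball p hppmf ?_, fun x => ?_⟩
  · have hdist : dist p q ≤ t := by
      rw [dist_pi_le_iff (le_of_lt ht0)]
      intro x
      rw [Real.dist_eq, hp]
      simp only
      have h1 : (1-t) * q x + t * (1/m) - q x = t * (1/m - q x) := by ring
      rw [h1, abs_mul, abs_of_pos ht0]
      have h2 : |1/m - q x| ≤ 1 := by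
        rw [abs_le]
        have := hq.1 x
        have := pmf_le_one hq x
        have h3 : 1/m ≤ 1 := by
          rw [div_le_one (by linarith)]; exact hm1
        have h4 : 0 < 1/m := by positivity
        constructor <;> linarith
      nlinarith
    calc dist p q ≤ t := hdist
      _ ≤ δ/2 := min_le_left _ _
      _ < δ := by linarith
  · rw [hp]
    simp only
    have h0 := hq.1 x
    have hmp : 0 < t * (1/m) := by positivity
    nlinarith [mul_nonneg (by linarith : (0:ℝ) ≤ 1-t) h0]

lemma approx_eventually [Nonempty X] {ν : X → ℝ}
    {Q : Set (X → ℝ)} (hQsub : Q ⊆ pmfSet X) (hQopen : IsOpen {r : ↥(pmfSet X) | ↑r ∈ Q})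
    {q : X → ℝ} (hqQ : q ∈ Q) (hqP : Pos ν q) {n0 : ℕ} (hn0 : 1 ≤ n0) {ε : ℝ} (hε : 0 < ε) :
    ∀ᶠ k in Filter.atTop, ∃ g, g ∈ Q ∧ g ∈ Rn X (k * n0) ∧ Pos ν g ∧
      fdiv ν q - ε ≤ fdiv ν g := by
  classical
  have hq := hQsub hqQ
  obtain ⟨δ, hδ, hball⟩ := exists_ball hQopen hq hqQ
  set mR : ℝ := (Fintype.card X : ℝ) with hmR
  set H : ℕ → X → ℝ := fun N => if h : 1 ≤ N then Classical.choose (round_exists hq h) else q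
    with hH
  have Hspec : ∀ N, 1 ≤ N → H N ∈ Rn X N ∧ ∀ x, |H N x - q x| ≤ mR / N := by
    intro N h
    rw [hH]; simp only [dif_pos h]
    exact Classical.choose_spec (round_exists hq h)
  have hNk : ∀ k : ℕ, 1 ≤ k → 1 ≤ k * n0 ∧ (k:ℝ) ≤ ((k*n0:ℕ):ℝ) := by
    intro k hk
    refine ⟨Nat.one_le_iff_ne_zero.2 (by positivity), ?_⟩
    have : k ≤ k * n0 := Nat.le_mul_of_pos_right k (by omega)
    exact_mod_cast this
  have hcoord : ∀ x, Filter.Tendsto (fun k => H (k*n0) x) Filter.atTop (𝓝 (q x)) := by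
    intro x
    apply tendsto_iff_dist_tendsto_zero.2
    apply squeeze_zero' (Filter.Eventually.of_forall fun k => dist_nonneg)
    · filter_upwards [Filter.eventually_ge_atTop 1] with k hk
      obtain ⟨h1, h2⟩ := hNk k hk
      have h3 := (Hspec _ h1).2 x
      have hkpos : (0:ℝ) < k := by exact_mod_cast hk
      have hm0 : 0 ≤ mR := by rw [hmR]; positivity
      calc dist (H (k*n0) x) (q x) ≤ mR / ((k*n0:ℕ):ℝ) := by rw [Real.dist_eq]; exact h3
        _ ≤ mR / k := div_le_div_of_nonneg_left hm0 hkpos h2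
    · exact tendsto_const_div_atTop_nhds_zero_nat mR
  have htend : Filter.Tendsto (fun k => H (k*n0)) Filter.atTop (𝓝 q) := tendsto_pi_nhds.2 hcoord
  have hmem_ev : ∀ᶠ k in Filter.atTop, H (k*n0) ∈ Q := by
    have hball_ev : ∀ᶠ k in Filter.atTop, H (k*n0) ∈ Metric.ball q δ :=
      htend.eventually_mem (Metric.ball_mem_nhds q hδ)
    filter_upwards [hball_ev, Filter.eventually_ge_atTop 1] with k h1 h2
    exact hball _ ((Hspec _ (hNk k h2).1).1.1) (Metric.mem_ball.1 h1)
  have hpos_ev : ∀ᶠ k in Filter.atTop, Pos ν (H (k*n0)) := by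
    have h1 : ∀ x, ∀ᶠ k in Filter.atTop, (ν x ≠ 0 → 0 < H (k*n0) x) := by
      intro x
      by_cases hx : ν x = 0
      · exact Filter.Eventually.of_forall fun k h => absurd hx h
      · filter_upwards [(hcoord x).eventually (eventually_gt_nhds (hqP x hx))] with k hk _
        exact hk
    have h2 : ∀ᶠ k in Filter.atTop, ∀ x, (ν x ≠ 0 → 0 < H (k*n0) x) := by
      rw [Filter.eventually_all]; exact h1
    exact h2
  have hfdiv_ev : ∀ᶠ k in Filter.atTop, fdiv ν q - ε ≤ fdiv ν (H (k*n0)) := by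
    have htf : Filter.Tendsto (fun k => fdiv ν (H (k*n0))) Filter.atTop (𝓝 (fdiv ν q)) := by
      have he : (fun k => fdiv ν (H (k*n0)))
          = fun k => ∑ x, ν x * Real.log (H (k*n0) x) := rfl
      rw [he, show fdiv ν q = ∑ x, ν x * Real.log (q x) from rfl]
      apply tendsto_finset_sum
      intro x _
      by_cases hx : ν x = 0
      · simp only [hx, zero_mul]; exact tendsto_const_nhds
      · exact ((Real.continuousAt_log (ne_of_gt (hqP x hx))).tendsto.comp (hcoord x)).const_mul
          (ν x)
    exact htf.eventually (eventually_ge_nhds (by linarith))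
  filter_upwards [hmem_ev, hpos_ev, hfdiv_ev, Filter.eventually_ge_atTop 1] with k h1 h2 h3 h4
  exact ⟨H (k*n0), h1, (Hspec _ (hNk k h4).1).1, h2, h3⟩

end Sanov

/-- Static Sanov's Theorem for Sources. -/
theorem static_sanov_for_sources {X : Type*} [Fintype X] [Nonempty X]
    (n0 : ℕ) (hn0 : 1 ≤ n0) (ν : X → ℝ) (hν : ν ∈ Rn X n0)
    (Q : Set (X → ℝ)) (hQsub : Q ⊆ pmfSet X) (hQne : Q.Nonempty)
    (hQopen : IsOpen {r : ↥(pmfSet X) | ↑r ∈ Q}) :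
    Filter.Tendsto
      (fun k : ℕ =>
        (↑((1 : ℝ) / ((k * n0 : ℕ) : ℝ)) : EReal) * elog (post (k * n0) ν Q))
      Filter.atTop (nhds (LSup Q ν - LSup (pmfSet X) ν)) := by
  classical
  have hνp : ν ∈ pmfSet X := hν.1
  set mN : ℕ := Fintype.card X with hmN
  set mR : ℝ := (mN : ℝ) with hmR
  have hm0 : 0 ≤ mR := by rw [hmR]; positivity
  set G : ℝ := Sanov.fdiv ν ν with hG
  obtain ⟨qs, hqsQ, hqspos⟩ := Sanov.exists_pos_mem hQsub hQne hQopen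
  have hSne : {q | q ∈ Q ∧ Sanov.Pos ν q}.Nonempty := ⟨qs, hqsQ, fun x _ => hqspos x⟩
  set A : ℝ := sSup (Sanov.fdiv ν '' {q | q ∈ Q ∧ Sanov.Pos ν q}) with hA
  have hbdd : BddAbove (Sanov.fdiv ν '' {q | q ∈ Q ∧ Sanov.Pos ν q}) := by
    refine ⟨G, ?_⟩
    rintro _ ⟨q, ⟨hq, hP⟩, rfl⟩
    exact Sanov.gibbs hνp (hQsub hq) hP
  have hAle : ∀ q, q ∈ Q → Sanov.Pos ν q → Sanov.fdiv ν q ≤ A := fun q hq hP =>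
    le_csSup hbdd ⟨q, ⟨hq, hP⟩, rfl⟩
  rw [Sanov.LSup_open hνp hQsub hSne, Sanov.LSup_pmfSet hνp, ← hA, ← hG, ← EReal.coe_sub]
  -- finite sums
  set Ssum : ℕ → ℝ := fun N => ∑ q ∈ Sanov.Dn X N, typeProb N ν q with hSsum
  set Nsum : ℕ → ℝ := fun N => ∑ q ∈ (Sanov.Dn X N).filter (· ∈ Q), typeProb N ν q with hNsum
  have hpost : ∀ N, 1 ≤ N → post N ν Q = Nsum N / Ssum N := by
    intro N h
    rw [post, Sanov.tsum_Rn h, Sanov.tsum_QRn h]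
  have hnk1 : ∀ k : ℕ, 1 ≤ k → 1 ≤ k * n0 := fun k hk =>
    Nat.one_le_iff_ne_zero.2 (by positivity)
  have hνRn : ∀ k : ℕ, 1 ≤ k → ν ∈ Rn X (k * n0) := by
    intro k hk
    refine ⟨hνp, fun x => ?_⟩
    obtain ⟨j, hj⟩ := hν.2 x
    refine ⟨k * j, ?_⟩
    rw [hj]
    have hk0 : (k:ℝ) ≠ 0 := by positivity
    have hn00 : (0:ℝ) < (n0:ℝ) := by exact_mod_cast hn0
    field_simp
    push_cast; ring
  -- nonnegativity of each term
  have htermnn : ∀ N : ℕ, ∀ q ∈ Sanov.Dn X N, 0 ≤ typeProb N ν q := by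
    intro N q hq
    exact Sanov.typeProb_nonneg N ν (fun x => (Sanov.Dn_mem hq).1.1 x)
  -- upper bound on terms
  have hterm_le : ∀ (N : ℕ) (B : ℝ), 1 ≤ N → ∀ q, q ∈ Sanov.Dn X N →
      (Sanov.Pos ν q → Sanov.fdiv ν q ≤ B) → typeProb N ν q ≤ Real.exp ((N:ℝ) * B) := by
    intro N B hN q hq hB
    have hqRn := Sanov.Dn_mem hq
    by_cases hP : Sanov.Pos ν q
    · rw [Sanov.typeProb_eq_exp hP]
      apply Real.exp_le_exp.2
      have hN0 : (0:ℝ) ≤ N := by positivity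
      exact mul_le_mul_of_nonneg_left (hB hP) hN0
    · rw [Sanov.typeProb_eq_zero hνp.1 (fun x => hqRn.1.1 x) hP hN]
      exact le_of_lt (Real.exp_pos _)
  -- denominator bounds
  have hSlow : ∀ k : ℕ, 1 ≤ k → Real.exp (((k*n0:ℕ):ℝ) * G) ≤ Ssum (k*n0) := by
    intro k hk
    have hmem : ν ∈ Sanov.Dn X (k*n0) := Sanov.mem_Dn (hnk1 k hk) (hνRn k hk)
    have h1 : typeProb (k*n0) ν ν ≤ Ssum (k*n0) :=
      Finset.single_le_sum (f := fun q => typeProb (k*n0) ν q)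
        (fun q hq => htermnn _ q hq) hmem
    calc Real.exp (((k*n0:ℕ):ℝ) * G) = typeProb (k*n0) ν ν := by
          rw [Sanov.typeProb_eq_exp (Sanov.Pos_self hνp), hG]
      _ ≤ Ssum (k*n0) := h1
  have hcard : ∀ N : ℕ, ((Sanov.Dn X N).card : ℝ) ≤ ((N:ℝ)+1) ^ mN := by
    intro N
    have h1 := Sanov.card_Dn_le (X := X) N
    calc ((Sanov.Dn X N).card : ℝ) ≤ (((N+1) ^ mN : ℕ) : ℝ) := by exact_mod_cast h1
      _ = ((N:ℝ)+1) ^ mN := by push_cast; ring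
  have hsum_le : ∀ (N : ℕ) (B : ℝ) (s : Finset (X → ℝ)), s ⊆ Sanov.Dn X N → 1 ≤ N →
      (∀ q ∈ s, Sanov.Pos ν q → Sanov.fdiv ν q ≤ B) →
      ∑ q ∈ s, typeProb N ν q ≤ ((N:ℝ)+1) ^ mN * Real.exp ((N:ℝ) * B) := by
    intro N B s hs hN hB
    calc ∑ q ∈ s, typeProb N ν q ≤ s.card • Real.exp ((N:ℝ) * B) :=
          Finset.sum_le_card_nsmul _ _ _ (fun q hq => hterm_le N B hN q (hs hq) (hB q hq))
      _ = (s.card : ℝ) * Real.exp ((N:ℝ) * B) := by rw [nsmul_eq_mul]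
      _ ≤ ((N:ℝ)+1) ^ mN * Real.exp ((N:ℝ) * B) := by
          refine mul_le_mul_of_nonneg_right (le_trans ?_ (hcard N)) (le_of_lt (Real.exp_pos _))
          exact_mod_cast Finset.card_le_card hs
  have hSup : ∀ k : ℕ, 1 ≤ k →
      Ssum (k*n0) ≤ (((k*n0:ℕ):ℝ)+1) ^ mN * Real.exp (((k*n0:ℕ):ℝ) * G) := by
    intro k hk
    exact hsum_le (k*n0) G _ (Finset.Subset.refl _) (hnk1 k hk)
      (fun q hq hP => Sanov.gibbs hνp (Sanov.Dn_mem hq).1 hP)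
  have hNup : ∀ k : ℕ, 1 ≤ k →
      Nsum (k*n0) ≤ (((k*n0:ℕ):ℝ)+1) ^ mN * Real.exp (((k*n0:ℕ):ℝ) * A) := by
    intro k hk
    apply hsum_le (k*n0) A _ (Finset.filter_subset _ _) (hnk1 k hk)
    intro q hq hP
    exact hAle q (Finset.mem_filter.1 hq).2 hP
  -- log term tends to zero
  have hntend : Filter.Tendsto (fun k : ℕ => ((k*n0:ℕ):ℝ)) Filter.atTop Filter.atTop := by
    apply tendsto_natCast_atTop_atTop.comp
    exact Filter.tendsto_atTop_mono (fun k => Nat.le_mul_of_pos_right k (by omega))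
      Filter.tendsto_id
  have hlogtend : Filter.Tendsto
      (fun k : ℕ => mR * (Real.log (((k*n0:ℕ):ℝ)+1) / ((k*n0:ℕ):ℝ)))
      Filter.atTop (𝓝 0) := by
    have hbase : Filter.Tendsto (fun x : ℝ => Real.log x ^ 1 / (1 * x + (-1)))
        Filter.atTop (𝓝 0) := Real.tendsto_pow_log_div_mul_add_atTop 1 (-1) 1 one_ne_zero
    have hshift : Filter.Tendsto (fun x : ℝ => x + 1) Filter.atTop Filter.atTop :=
      tendsto_atTop_add_const_right _ 1 tendsto_id
    have hcomp := (hbase.comp hshift).comp hntend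
    have heq : ∀ k : ℕ, ((fun x : ℝ => Real.log x ^ 1 / (1 * x + (-1)))
        ∘ ((fun x : ℝ => x + 1) ∘ (fun k : ℕ => ((k*n0:ℕ):ℝ)))) k
        = Real.log (((k*n0:ℕ):ℝ)+1) / ((k*n0:ℕ):ℝ) := by
      intro k
      simp only [Function.comp_apply, pow_one]
      ring_nf
    have h2 := (hcomp.congr heq).const_mul mR
    simpa using h2
  -- eventual lower bound on the numerator
  have hNlow : ∀ ε : ℝ, 0 < ε → ∀ᶠ k in Filter.atTop,
      Real.exp (((k*n0:ℕ):ℝ) * (A - ε)) ≤ Nsum (k*n0) := by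
    intro ε hε
    have hlt : A - ε/2 < sSup (Sanov.fdiv ν '' {q | q ∈ Q ∧ Sanov.Pos ν q}) := by
      rw [← hA]; linarith
    obtain ⟨y, hyS, hygt⟩ := exists_lt_of_lt_csSup (hSne.image _) hlt
    obtain ⟨q1, hq1S, rfl⟩ := hyS
    have happ := Sanov.approx_eventually hQsub hQopen hq1S.1 hq1S.2 hn0
      (show 0 < ε/2 by linarith)
    filter_upwards [happ, Filter.eventually_ge_atTop 1] with k hg hk1
    obtain ⟨g, hgQ, hgRn, hgP, hgf⟩ := hg
    have hgDn : g ∈ (Sanov.Dn X (k*n0)).filter (· ∈ Q) :=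
      Finset.mem_filter.2 ⟨Sanov.mem_Dn (hnk1 k hk1) hgRn, hgQ⟩
    have h1 : typeProb (k*n0) ν g ≤ Nsum (k*n0) :=
      Finset.single_le_sum (f := fun q => typeProb (k*n0) ν q)
        (fun q hq => htermnn _ q (Finset.mem_filter.1 hq).1) hgDn
    have h2 : Real.exp (((k*n0:ℕ):ℝ) * (A - ε)) ≤ typeProb (k*n0) ν g := by
      rw [Sanov.typeProb_eq_exp hgP]
      apply Real.exp_le_exp.2
      have hN0 : (0:ℝ) ≤ ((k*n0:ℕ):ℝ) := by positivity
      apply mul_le_mul_of_nonneg_left _ hN0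
      linarith [hgf, hygt]
    linarith
  have hSpos : ∀ k : ℕ, 1 ≤ k → 0 < Ssum (k*n0) := fun k hk =>
    lt_of_lt_of_le (Real.exp_pos _) (hSlow k hk)
  have hNpos_ev : ∀ᶠ k in Filter.atTop, 0 < Nsum (k*n0) := by
    filter_upwards [hNlow 1 one_pos] with k h
    exact lt_of_lt_of_le (Real.exp_pos _) h
  -- the real-valued limit
  have hReal : Filter.Tendsto
      (fun k : ℕ => (1:ℝ)/((k*n0:ℕ):ℝ) * Real.log (Nsum (k*n0) / Ssum (k*n0)))
      Filter.atTop (𝓝 (A - G)) := by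
    rw [Metric.tendsto_atTop]
    intro ε hε
    have hev : ∀ᶠ k in Filter.atTop,
        (1 ≤ k) ∧ (Real.exp (((k*n0:ℕ):ℝ)*(A - ε/2)) ≤ Nsum (k*n0)) ∧
        (mR * (Real.log (((k*n0:ℕ):ℝ)+1) / ((k*n0:ℕ):ℝ)) < ε/4) := by
      refine (Filter.eventually_ge_atTop 1).and ((hNlow (ε/2) (by linarith)).and ?_)
      exact hlogtend.eventually (eventually_lt_nhds (show (0:ℝ) < ε/4 by linarith))
    rw [Filter.eventually_atTop] at hev
    obtain ⟨K, hK⟩ := hev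
    refine ⟨K, fun k hk => ?_⟩
    obtain ⟨hk1, hNlo, hsmall⟩ := hK k hk
    set nR : ℝ := ((k*n0:ℕ):ℝ) with hnRd
    have hnRpos : 0 < nR := by
      rw [hnRd]
      exact_mod_cast Nat.lt_of_lt_of_le Nat.zero_lt_one (hnk1 k hk1)
    set c : ℝ := mR * Real.log (nR+1) with hc
    have hc0 : 0 ≤ c := by
      rw [hc]
      apply mul_nonneg hm0
      apply Real.log_nonneg; linarith
    have hcε : c < nR * (ε/4) := by
      rw [hc]
      calc mR * Real.log (nR+1) = (mR * (Real.log (nR+1) / nR)) * nR := by field_simp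
        _ < (ε/4) * nR := mul_lt_mul_of_pos_right hsmall hnRpos
        _ = nR * (ε/4) := by ring
    have hNp : 0 < Nsum (k*n0) := lt_of_lt_of_le (Real.exp_pos _) hNlo
    have hSp : 0 < Ssum (k*n0) := hSpos k hk1
    set L := Real.log (Nsum (k*n0)) with hLd
    set l := Real.log (Ssum (k*n0)) with hld
    have hl_lo : nR * G ≤ l := by
      rw [hld]
      calc nR * G = Real.log (Real.exp (nR * G)) := (Real.log_exp _).symm
        _ ≤ Real.log (Ssum (k*n0)) := Real.log_le_log (Real.exp_pos _) (hSlow k hk1)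
    have hl_hi : l ≤ c + nR * G := by
      rw [hld, hc]
      calc Real.log (Ssum (k*n0)) ≤ Real.log ((nR+1)^mN * Real.exp (nR*G)) :=
            Real.log_le_log hSp (hSup k hk1)
        _ = mR * Real.log (nR+1) + nR * G := by
            rw [Real.log_mul (ne_of_gt (by positivity)) (ne_of_gt (Real.exp_pos _)),
              Real.log_pow, Real.log_exp, hmR]
    have hL_hi : L ≤ c + nR * A := by
      rw [hLd, hc]
      calc Real.log (Nsum (k*n0)) ≤ Real.log ((nR+1)^mN * Real.exp (nR*A)) :=
            Real.log_le_log hNp (hNup k hk1)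
        _ = mR * Real.log (nR+1) + nR * A := by
            rw [Real.log_mul (ne_of_gt (by positivity)) (ne_of_gt (Real.exp_pos _)),
              Real.log_pow, Real.log_exp, hmR]
    have hL_lo : nR * (A - ε/2) ≤ L := by
      rw [hLd]
      calc nR * (A - ε/2) = Real.log (Real.exp (nR * (A - ε/2))) := (Real.log_exp _).symm
        _ ≤ Real.log (Nsum (k*n0)) := Real.log_le_log (Real.exp_pos _) hNlo
    have hlogdiv : Real.log (Nsum (k*n0) / Ssum (k*n0)) = L - l :=
      Real.log_div (ne_of_gt hNp) (ne_of_gt hSp)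
    rw [Real.dist_eq, hlogdiv]
    have hXn : nR * ((1:ℝ)/nR * (L - l)) = L - l := by field_simp
    rw [abs_lt]
    constructor
    · have h1 : nR * (-ε) < nR * ((1:ℝ)/nR * (L - l) - (A - G)) := by
        rw [mul_sub, hXn]
        nlinarith [mul_pos hnRpos hε]
      exact lt_of_mul_lt_mul_left h1 (le_of_lt hnRpos)
    · have h2 : nR * ((1:ℝ)/nR * (L - l) - (A - G)) < nR * ε := by
        rw [mul_sub, hXn]
        nlinarith [mul_pos hnRpos hε]
      exact lt_of_mul_lt_mul_left h2 (le_of_lt hnRpos)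
  -- transfer to EReal
  have hfinal : Filter.Tendsto (fun k : ℕ =>
      (((1:ℝ)/((k*n0:ℕ):ℝ) * Real.log (Nsum (k*n0) / Ssum (k*n0)) : ℝ) : EReal))
      Filter.atTop (𝓝 (((A - G : ℝ)) : EReal)) := EReal.tendsto_coe.2 hReal
  refine hfinal.congr' ?_
  filter_upwards [hNpos_ev, Filter.eventually_ge_atTop 1] with k hNp hk1
  have hSp := hSpos k hk1
  rw [hpost _ (hnk1 k hk1)]
  simp only [elog]
  rw [if_neg (not_le.2 (div_pos hNp hSp)), ← EReal.coe_mul]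
end
end

section
/- Static Law of Large Numbers for Sources: Let n0 ≥ 1 and let ν ∈ R_{n0} be an n0-rational type. Then ν is the unique L-projection of ν on P(X) (i.e., the unique maximizer of q ↦ L(q‖ν) over P(X)), and for every ε > 0, π_n(B(ν,ε)|ν) → 1 as k → ∞ along the subsequence n = k·n0. -/
open scoped BigOperators Classical
open Filter Topology

noncomputable section

def Lr {X : Type*} [Fintype X] (ν q : X → ℝ) : ℝ :=
  ∑ x, if ν x = 0 then 0 else ν x * Real.log (q x)

lemma gibbs_real {X : Type*} [Fintype X] (ν q : X → ℝ)
    (hν : ν ∈ pmfSet X) (hq : q ∈ pmfSet X) (hpos : ∀ x, ν x ≠ 0 → q x ≠ 0) :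
    Lr ν q ≤ Lr ν ν - (tv q ν) ^ 2 := by
  obtain ⟨hν0, hν1⟩ := hν
  obtain ⟨hq0, hq1⟩ := hq
  set s : X → ℝ := fun x => Real.sqrt (ν x) with hs
  set t : X → ℝ := fun x => Real.sqrt (q x) with ht
  have hs2 : ∀ x, s x ^ 2 = ν x := fun x => Real.sq_sqrt (hν0 x)
  have ht2 : ∀ x, t x ^ 2 = q x := fun x => Real.sq_sqrt (hq0 x)
  have hst : ∀ x, s x * t x = Real.sqrt (ν x * q x) :=
    fun x => (Real.sqrt_mul (hν0 x) _).symm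
  have hsnn : ∀ x, 0 ≤ s x := fun x => Real.sqrt_nonneg _
  have htnn : ∀ x, 0 ≤ t x := fun x => Real.sqrt_nonneg _
  have step1 : Lr ν q - Lr ν ν ≤ ∑ x, (2 * (s x * t x) - 2 * ν x) := by
    rw [Lr, Lr, ← Finset.sum_sub_distrib]
    apply Finset.sum_le_sum
    intro x _
    by_cases h : ν x = 0
    · simp [h, hst x]
    · have hνx : 0 < ν x := lt_of_le_of_ne (hν0 x) (Ne.symm h)
      have hqx : 0 < q x := lt_of_le_of_ne (hq0 x) (Ne.symm (hpos x h))
      simp only [if_neg h]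
      have hu : 0 < q x / ν x := div_pos hqx hνx
      have hlog : Real.log (q x) - Real.log (ν x) = Real.log (q x / ν x) :=
        (Real.log_div (ne_of_gt hqx) (ne_of_gt hνx)).symm
      have hle : Real.log (q x / ν x) ≤ 2 * (Real.sqrt (q x / ν x) - 1) := by
        have := Real.log_le_sub_one_of_pos (Real.sqrt_pos.mpr hu)
        have hlq : Real.log (Real.sqrt (q x / ν x)) = Real.log (q x / ν x) / 2 :=
          Real.log_sqrt hu.le
        nlinarith
      have hmul : ν x * Real.sqrt (q x / ν x) = s x * t x := by
        rw [hst]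
        rw [show ν x * q x = (ν x)^2 * (q x / ν x) by field_simp]
        rw [Real.sqrt_mul (sq_nonneg _), Real.sqrt_sq (hν0 x)]
      calc ν x * Real.log (q x) - ν x * Real.log (ν x)
          = ν x * (Real.log (q x) - Real.log (ν x)) := by ring
        _ = ν x * Real.log (q x / ν x) := by rw [hlog]
        _ ≤ ν x * (2 * (Real.sqrt (q x / ν x) - 1)) := by
            exact mul_le_mul_of_nonneg_left hle (hν0 x)
        _ = 2 * (ν x * Real.sqrt (q x / ν x)) - 2 * ν x := by ring
        _ = 2 * (s x * t x) - 2 * ν x := by rw [hmul]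
  have hdiff : ∀ x : X, (s x - t x) ^ 2 = ν x + q x - 2 * (s x * t x) := by
    intro x; rw [← hs2 x, ← ht2 x]; ring
  have h4 : ∑ x, (s x - t x) ^ 2 = 2 - 2 * ∑ x, s x * t x := by
    rw [Finset.sum_congr rfl (fun x _ => hdiff x), Finset.sum_sub_distrib,
      Finset.sum_add_distrib, hν1, hq1, ← Finset.mul_sum]; norm_num
  have hsum_st : ∑ x, (2 * (s x * t x) - 2 * ν x) = -∑ x, (s x - t x) ^ 2 := by
    rw [h4, Finset.sum_sub_distrib, ← Finset.mul_sum, ← Finset.mul_sum, hν1]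
    ring
  -- Cauchy-Schwarz part
  have hCS : (∑ x, |q x - ν x|) ^ 2 ≤ 4 * ∑ x, (s x - t x) ^ 2 := by
    have habs : ∀ x, |q x - ν x| = |s x - t x| * (s x + t x) := by
      intro x
      have e : q x - ν x = (t x - s x) * (t x + s x) := by
        rw [← hs2 x, ← ht2 x]; ring
      rw [e, abs_mul, abs_of_nonneg (add_nonneg (htnn x) (hsnn x)), abs_sub_comm]
      ring
    have hcs := Finset.sum_mul_sq_le_sq_mul_sq Finset.univ
      (fun x => |s x - t x|) (fun x => s x + t x)
    have hsub : ∑ x, |s x - t x| ^ 2 = ∑ x, (s x - t x) ^ 2 := by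
      apply Finset.sum_congr rfl; intro x _; rw [sq_abs]
    have hplus : ∑ x, (s x + t x) ^ 2 ≤ 4 := by
      have h2 : ∑ x, (s x + t x) ^ 2 = 2 + 2 * ∑ x, s x * t x := by
        have e : ∀ x : X, (s x + t x) ^ 2 = ν x + q x + 2 * (s x * t x) := by
          intro x; rw [← hs2 x, ← ht2 x]; ring
        rw [Finset.sum_congr rfl (fun x _ => e x), Finset.sum_add_distrib,
          Finset.sum_add_distrib, hν1, hq1, ← Finset.mul_sum]; norm_num
      have h3 : 0 ≤ ∑ x, (s x - t x) ^ 2 :=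
        Finset.sum_nonneg fun x _ => sq_nonneg _
      rw [h4] at h3
      linarith
    calc (∑ x, |q x - ν x|) ^ 2 = (∑ x, |s x - t x| * (s x + t x)) ^ 2 := by
          congr 1; exact Finset.sum_congr rfl fun x _ => habs x
      _ ≤ (∑ x, |s x - t x| ^ 2) * ∑ x, (s x + t x) ^ 2 := hcs
      _ = (∑ x, (s x - t x) ^ 2) * ∑ x, (s x + t x) ^ 2 := by rw [hsub]
      _ ≤ (∑ x, (s x - t x) ^ 2) * 4 := by
          apply mul_le_mul_of_nonneg_left hplus (Finset.sum_nonneg fun x _ => sq_nonneg _)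
      _ = 4 * ∑ x, (s x - t x) ^ 2 := by ring
  have htv : (tv q ν) ^ 2 ≤ ∑ x, (s x - t x) ^ 2 := by
    rw [tv]
    nlinarith [hCS]
  linarith [step1, hsum_st.symm ▸ step1, htv]

lemma ereal_coe_sum {ι : Type*} (s : Finset ι) (f : ι → ℝ) :
    ((∑ i ∈ s, f i : ℝ) : EReal) = ∑ i ∈ s, (f i : EReal) :=
  map_sum (⟨⟨Real.toEReal, EReal.coe_zero⟩, EReal.coe_add⟩ : ℝ →+ EReal) f s

lemma Ldiv_eq_coe {X : Type*} [Fintype X] (ν q : X → ℝ)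
    (hpos : ∀ x, ν x ≠ 0 → q x ≠ 0) :
    Ldiv q ν = ((Lr ν q : ℝ) : EReal) := by
  rw [Ldiv, Lr, ereal_coe_sum]
  apply Finset.sum_congr rfl
  intro x _
  by_cases h : ν x = 0
  · simp [h]
  · rw [if_neg h, if_neg h, if_neg (hpos x h)]

lemma Ldiv_eq_bot {X : Type*} [Fintype X] (ν q : X → ℝ) (x0 : X)
    (h1 : ν x0 ≠ 0) (h2 : q x0 = 0) : Ldiv q ν = ⊥ := by
  rw [Ldiv, ← Finset.add_sum_erase _ _ (Finset.mem_univ x0), if_neg h1, if_pos h2,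
    EReal.bot_add]

lemma tv_eq_zero {X : Type*} [Fintype X] {q ν : X → ℝ} (h : tv q ν = 0) : q = ν := by
  rw [tv] at h
  have h2 : ∑ x, |q x - ν x| = 0 := by linarith
  funext x
  have := (Finset.sum_eq_zero_iff_of_nonneg (fun y _ => abs_nonneg (q y - ν y))).mp h2 x
    (Finset.mem_univ x)
  have := abs_eq_zero.mp this
  linarith

lemma tv_nonneg {X : Type*} [Fintype X] (q ν : X → ℝ) : 0 ≤ tv q ν :=
  mul_nonneg (by norm_num) (Finset.sum_nonneg fun x _ => abs_nonneg _)

lemma part12 {X : Type*} [Fintype X] (ν : X → ℝ) (hν : ν ∈ pmfSet X) :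
    (∀ q ∈ pmfSet X, Ldiv q ν ≤ Ldiv ν ν) ∧
    (∀ q ∈ pmfSet X, Ldiv q ν = Ldiv ν ν → q = ν) := by
  have hIν : Ldiv ν ν = ((Lr ν ν : ℝ) : EReal) := Ldiv_eq_coe ν ν (fun _ h => h)
  constructor
  · intro q hq
    by_cases hpos : ∀ x, ν x ≠ 0 → q x ≠ 0
    · rw [Ldiv_eq_coe ν q hpos, hIν, EReal.coe_le_coe_iff]
      have := gibbs_real ν q hν hq hpos
      nlinarith [sq_nonneg (tv q ν)]
    · push_neg at hpos
      obtain ⟨x0, h1, h2⟩ := hpos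
      rw [Ldiv_eq_bot ν q x0 h1 h2]
      exact bot_le
  · intro q hq heq
    by_cases hpos : ∀ x, ν x ≠ 0 → q x ≠ 0
    · rw [Ldiv_eq_coe ν q hpos, hIν, EReal.coe_eq_coe_iff] at heq
      have hg := gibbs_real ν q hν hq hpos
      have h0 : (tv q ν) ^ 2 ≤ 0 := by linarith
      have : tv q ν = 0 := by nlinarith [tv_nonneg q ν]
      exact tv_eq_zero this
    · push_neg at hpos
      obtain ⟨x0, h1, h2⟩ := hpos
      rw [Ldiv_eq_bot ν q x0 h1 h2, hIν] at heq
      exact absurd heq.symm (EReal.coe_ne_bot _)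

lemma typeProb_nonneg {X : Type*} [Fintype X] (n : ℕ) (ν q : X → ℝ)
    (hq : ∀ x, 0 ≤ q x) : 0 ≤ typeProb n ν q :=
  Finset.prod_nonneg fun x _ => Real.rpow_nonneg (hq x) _

lemma typeProb_eq_exp {X : Type*} [Fintype X] (n : ℕ) (ν q : X → ℝ)
    (hq0 : ∀ x, 0 ≤ q x) (hpos : ∀ x, ν x ≠ 0 → q x ≠ 0) :
    typeProb n ν q = Real.exp ((n : ℝ) * Lr ν q) := by
  have hLr : (n : ℝ) * Lr ν q
      = ∑ x, (n : ℝ) * (if ν x = 0 then 0 else ν x * Real.log (q x)) := by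
    rw [Lr, Finset.mul_sum]
  rw [typeProb, hLr, Real.exp_sum]
  apply Finset.prod_congr rfl
  intro x _
  by_cases h : ν x = 0
  · simp [h]
  · have hqx : 0 < q x := lt_of_le_of_ne (hq0 x) (Ne.symm (hpos x h))
    rw [if_neg h, Real.rpow_def_of_pos hqx]
    congr 1
    ring

lemma typeProb_eq_zero {X : Type*} [Fintype X] (n : ℕ) (ν q : X → ℝ) (hn : n ≠ 0)
    (x0 : X) (h1 : ν x0 ≠ 0) (h2 : q x0 = 0) : typeProb n ν q = 0 := by
  apply Finset.prod_eq_zero (Finset.mem_univ x0)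
  rw [h2, Real.zero_rpow]
  exact mul_ne_zero (Nat.cast_ne_zero.mpr hn) h1

lemma Rn_subset_range {X : Type*} [Fintype X] (n : ℕ) (hn : 0 < n) :
    Rn X n ⊆ Set.range (fun f : X → Fin (n+1) => fun x : X => ((f x : ℕ) : ℝ) / n) := by
  rintro q ⟨⟨h0, h1⟩, h2⟩
  choose k hk using h2
  have hnR : (0 : ℝ) < n := by exact_mod_cast hn
  have hkn : ∀ x, k x < n + 1 := by
    intro x
    have hq1 : q x ≤ 1 := by
      rw [← h1]
      exact Finset.single_le_sum (fun y _ => h0 y) (Finset.mem_univ x)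
    rw [hk x, div_le_one hnR] at hq1
    have : k x ≤ n := by exact_mod_cast hq1
    omega
  exact ⟨fun x => ⟨k x, hkn x⟩, by funext x; exact (hk x).symm⟩

lemma Rn_finite (X : Type*) [Fintype X] (n : ℕ) (hn : 0 < n) : (Rn X n).Finite :=
  Set.Finite.subset (Set.finite_range _) (Rn_subset_range n hn)

lemma Rn_card_le {X : Type*} [Fintype X] (n : ℕ) (hn : 0 < n) :
    (Rn_finite X n hn).toFinset.card ≤ (n + 1) ^ Fintype.card X := by
  have hsub : (Rn_finite X n hn).toFinset ⊆
      Finset.image (fun f : X → Fin (n+1) => fun x : X => ((f x : ℕ) : ℝ) / n)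
        Finset.univ := by
    intro q hq
    rw [Set.Finite.mem_toFinset] at hq
    obtain ⟨f, hf⟩ := Rn_subset_range n hn hq
    exact Finset.mem_image.mpr ⟨f, Finset.mem_univ f, hf⟩
  calc (Rn_finite X n hn).toFinset.card ≤ _ := Finset.card_le_card hsub
    _ ≤ Finset.univ.card := Finset.card_image_le
    _ = (n + 1) ^ Fintype.card X := by
        rw [Finset.card_univ, Fintype.card_fun, Fintype.card_fin]

lemma tsum_finite {α : Type*} {S : Set α} (hS : S.Finite) (f : α → ℝ) :
    ∑' q : ↥S, f ↑q = ∑ q ∈ hS.toFinset, f q := by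
  rw [tsum_subtype, tsum_eq_sum (s := hS.toFinset)
    (fun b hb => Set.indicator_of_notMem (by simpa using hb) f)]
  exact Finset.sum_congr rfl fun q hq =>
    Set.indicator_of_mem (hS.mem_toFinset.mp hq) f

lemma Rn_mul {X : Type*} [Fintype X] (ν : X → ℝ) (n0 k : ℕ) (hk : k ≠ 0)
    (h : ν ∈ Rn X n0) : ν ∈ Rn X (k * n0) := by
  refine ⟨h.1, fun x => ?_⟩
  obtain ⟨j, hj⟩ := h.2 x
  refine ⟨k * j, ?_⟩
  rw [hj]
  push_cast
  rw [mul_div_mul_left _ _ (by exact_mod_cast hk : (k : ℝ) ≠ 0)]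

lemma post_bounds {X : Type*} [Fintype X] (n : ℕ) (hn : 0 < n) (ν : X → ℝ)
    (hνn : ν ∈ Rn X n) (ε : ℝ) (hε : 0 < ε) :
    1 - ((n : ℝ) + 1) ^ Fintype.card X * Real.exp (-((n : ℝ) * ε ^ 2))
      ≤ post n ν (tvBall ν ε) ∧ post n ν (tvBall ν ε) ≤ 1 := by
  classical
  have hνpmf := hνn.1
  have hν0 := hνpmf.1
  have hν1 := hνpmf.2
  set m := Fintype.card X
  have hfin := Rn_finite X n hn
  set T := hfin.toFinset with hT
  have hmemT : ∀ q ∈ T, q ∈ Rn X n := fun q hq => hfin.mem_toFinset.mp hq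
  have hpmfT : ∀ q ∈ T, q ∈ pmfSet X := fun q hq => (hmemT q hq).1
  have hnn : ∀ q ∈ T, 0 ≤ typeProb n ν q :=
    fun q hq => typeProb_nonneg n ν q (hpmfT q hq).1
  set Q := tvBall ν ε with hQ
  have hfin2 : (Q ∩ Rn X n).Finite := hfin.subset Set.inter_subset_right
  have hfinset2 : hfin2.toFinset = T.filter (· ∈ Q) := by
    ext q
    simp only [Set.Finite.mem_toFinset, Set.mem_inter_iff, Finset.mem_filter, hT,
      Set.Finite.mem_toFinset]
    tauto
  set D := ∑ q ∈ T, typeProb n ν q with hD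
  set N := ∑ q ∈ T.filter (· ∈ Q), typeProb n ν q with hN
  set Rest := ∑ q ∈ T.filter (fun q => ¬ q ∈ Q), typeProb n ν q with hRest
  have hsplit : N + Rest = D := Finset.sum_filter_add_sum_filter_not T _ _
  have hpost : post n ν Q = N / D := by
    rw [post, tsum_finite hfin2, tsum_finite hfin, hfinset2]
  -- D is at least the ν-term
  have hνT : ν ∈ T := hfin.mem_toFinset.mpr hνn
  have hνterm : typeProb n ν ν = Real.exp ((n : ℝ) * Lr ν ν) :=
    typeProb_eq_exp n ν ν hν0 (fun _ h => h)
  have hDge : Real.exp ((n : ℝ) * Lr ν ν) ≤ D := by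
    rw [← hνterm]
    exact Finset.single_le_sum hnn hνT
  have hDpos : 0 < D := lt_of_lt_of_le (Real.exp_pos _) hDge
  -- each term in Rest is small
  have hterm : ∀ q ∈ T.filter (fun q => ¬ q ∈ Q),
      typeProb n ν q ≤ Real.exp ((n : ℝ) * (Lr ν ν - ε ^ 2)) := by
    intro q hq
    rw [Finset.mem_filter] at hq
    obtain ⟨hqT, hqQ⟩ := hq
    have hqRn := hmemT q hqT
    have hqpmf := hqRn.1
    have htvgt : ε < tv q ν := by
      by_contra hc
      push_neg at hc
      exact hqQ ⟨hqpmf, hc⟩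
    by_cases hpos : ∀ x, ν x ≠ 0 → q x ≠ 0
    · rw [typeProb_eq_exp n ν q hqpmf.1 hpos]
      apply Real.exp_le_exp.mpr
      apply mul_le_mul_of_nonneg_left _ (Nat.cast_nonneg n)
      have hg := gibbs_real ν q ⟨hν0, hν1⟩ hqpmf hpos
      nlinarith [tv_nonneg q ν]
    · push_neg at hpos
      obtain ⟨x0, h1, h2⟩ := hpos
      rw [typeProb_eq_zero n ν q hn.ne' x0 h1 h2]
      exact (Real.exp_pos _).le
  have hcard : (T.filter (fun q => ¬ q ∈ Q)).card ≤ (n + 1) ^ m :=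
    le_trans (Finset.card_le_card (Finset.filter_subset _ _)) (Rn_card_le n hn)
  have hRestle : Rest ≤ ((n : ℝ) + 1) ^ m * Real.exp ((n : ℝ) * (Lr ν ν - ε ^ 2)) := by
    calc Rest ≤ (T.filter (fun q => ¬ q ∈ Q)).card
          • Real.exp ((n : ℝ) * (Lr ν ν - ε ^ 2)) :=
          Finset.sum_le_card_nsmul _ _ _ hterm
      _ = ((T.filter (fun q => ¬ q ∈ Q)).card : ℝ)
          * Real.exp ((n : ℝ) * (Lr ν ν - ε ^ 2)) := by rw [nsmul_eq_mul]
      _ ≤ ((n : ℝ) + 1) ^ m * Real.exp ((n : ℝ) * (Lr ν ν - ε ^ 2)) := by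
          apply mul_le_mul_of_nonneg_right _ (Real.exp_pos _).le
          calc ((T.filter (fun q => ¬ q ∈ Q)).card : ℝ)
              ≤ (((n + 1) ^ m : ℕ) : ℝ) := by exact_mod_cast hcard
            _ = ((n : ℝ) + 1) ^ m := by push_cast; ring
  have hRest0 : 0 ≤ Rest :=
    Finset.sum_nonneg fun q hq => hnn q (Finset.mem_filter.mp hq).1
  have hratio : Rest / D ≤ ((n : ℝ) + 1) ^ m * Real.exp (-((n : ℝ) * ε ^ 2)) := by
    have h1 : Rest / D ≤ (((n : ℝ) + 1) ^ m * Real.exp ((n : ℝ) * (Lr ν ν - ε ^ 2)))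
        / Real.exp ((n : ℝ) * Lr ν ν) :=
      div_le_div₀ (mul_nonneg (by positivity) (Real.exp_pos _).le) hRestle
        (Real.exp_pos _) hDge
    calc Rest / D ≤ _ := h1
      _ = ((n : ℝ) + 1) ^ m * Real.exp (-((n : ℝ) * ε ^ 2)) := by
          rw [mul_div_assoc, ← Real.exp_sub]
          congr 2
          ring
  have hNd : N = D - Rest := by linarith
  have hdiv0 : 0 ≤ Rest / D := div_nonneg hRest0 hDpos.le
  rw [hpost, hNd, sub_div, div_self hDpos.ne']
  constructor
  · linarith
  · linarith

lemma bound_tendsto {m : ℕ} {ε : ℝ} (hε : 0 < ε) (n0 : ℕ) (hn0 : 1 ≤ n0) :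
    Tendsto (fun k : ℕ => (((k * n0 : ℕ) : ℝ) + 1) ^ m
      * Real.exp (-(((k * n0 : ℕ) : ℝ) * ε ^ 2))) atTop (𝓝 0) := by
  set c := ε ^ 2 with hc
  have hcpos : 0 < c := by positivity
  have hmain : Tendsto (fun n : ℕ => ((n : ℝ) + 1) ^ m * Real.exp (-((n : ℝ) * c)))
      atTop (𝓝 0) := by
    have hcomp : Tendsto (fun n : ℕ => (c * (n : ℝ)) ^ m * Real.exp (-(c * (n : ℝ))))
        atTop (𝓝 0) :=
      (Real.tendsto_pow_mul_exp_neg_atTop_nhds_zero m).comp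
        ((tendsto_natCast_atTop_atTop).const_mul_atTop hcpos)
    have hC : Tendsto (fun n : ℕ => (2 / c) ^ m
        * ((c * (n : ℝ)) ^ m * Real.exp (-(c * (n : ℝ))))) atTop (𝓝 0) := by
      have := hcomp.const_mul ((2 / c) ^ m)
      simpa using this
    apply squeeze_zero' (Filter.Eventually.of_forall fun n => by positivity) _ hC
    filter_upwards [eventually_ge_atTop 1] with n hn
    have hn1 : (1 : ℝ) ≤ (n : ℝ) := by exact_mod_cast hn
    have h2n : ((n : ℝ) + 1) ≤ 2 * (n : ℝ) := by linarith
    have hpow : ((n : ℝ) + 1) ^ m ≤ (2 * (n : ℝ)) ^ m :=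
      pow_le_pow_left₀ (by linarith) h2n m
    have heq : (2 * (n : ℝ)) ^ m = (2 / c) ^ m * (c * (n : ℝ)) ^ m := by
      rw [← mul_pow]
      congr 1
      field_simp
    have hexp : Real.exp (-((n : ℝ) * c)) = Real.exp (-(c * (n : ℝ))) := by
      rw [mul_comm]
    calc ((n : ℝ) + 1) ^ m * Real.exp (-((n : ℝ) * c))
        ≤ (2 * (n : ℝ)) ^ m * Real.exp (-((n : ℝ) * c)) :=
          mul_le_mul_of_nonneg_right hpow (Real.exp_pos _).le
      _ = (2 / c) ^ m * ((c * (n : ℝ)) ^ m * Real.exp (-(c * (n : ℝ)))) := by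
          rw [heq, hexp]; ring
  have hmul : Tendsto (fun k : ℕ => k * n0) atTop atTop := by
    apply tendsto_atTop_mono (fun k => ?_) tendsto_id
    calc (id k : ℕ) = k * 1 := (mul_one k).symm
      _ ≤ k * n0 := Nat.mul_le_mul_left k hn0
  exact hmain.comp hmul

/-- Static Law of Large Numbers for Sources. -/
theorem static_LLN_for_sources {X : Type*} [Fintype X] [Nonempty X]
    (n0 : ℕ) (hn0 : 1 ≤ n0) (ν : X → ℝ) (hν : ν ∈ Rn X n0) :
    (∀ q ∈ pmfSet X, Ldiv q ν ≤ Ldiv ν ν) ∧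
    (∀ q ∈ pmfSet X, Ldiv q ν = Ldiv ν ν → q = ν) ∧
    (∀ ε : ℝ, 0 < ε →
      Filter.Tendsto (fun k : ℕ => post (k * n0) ν (tvBall ν ε))
        Filter.atTop (nhds 1)) := by
  refine ⟨(part12 ν hν.1).1, (part12 ν hν.1).2, ?_⟩
  intro ε hε
  have hg := bound_tendsto (m := Fintype.card X) hε n0 hn0
  have hlow : Tendsto (fun k : ℕ => 1 - (((k * n0 : ℕ) : ℝ) + 1) ^ Fintype.card X
      * Real.exp (-(((k * n0 : ℕ) : ℝ) * ε ^ 2))) atTop (𝓝 1) := by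
    have h1 : Tendsto (fun _ : ℕ => (1 : ℝ)) atTop (𝓝 1) := tendsto_const_nhds
    have := h1.sub hg
    simpa using this
  apply tendsto_of_tendsto_of_tendsto_of_le_of_le' hlow
    (tendsto_const_nhds : Tendsto (fun _ : ℕ => (1 : ℝ)) atTop (𝓝 1))
  · filter_upwards [eventually_ge_atTop 1] with k hk
    have hkpos : 0 < k * n0 := Nat.mul_pos hk hn0
    exact (post_bounds (k * n0) hkpos ν (Rn_mul ν n0 k (by omega) hν) ε hε).1
  · filter_upwards [eventually_ge_atTop 1] with k hk
    have hkpos : 0 < k * n0 := Nat.mul_pos hk hn0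
    exact (post_bounds (k * n0) hkpos ν (Rn_mul ν n0 k (by omega) hν) ε hε).2
end
end
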